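/- Let I: R^n_{>0} → R^n_{>0} be two-sided scalable, and define f: R^n → R^n by f(x) = ln(I(e^x)) (componentwise logarithm and exponential). Then for all x ≠ y, ‖f(x) − f(y)‖_∞ < ‖x − y‖_∞, i.e., f is a shrinking map in the sup norm. -/
import Mathlib


/-- A function `I` on positive vectors is two-sided scalable if for all `c > 1`
and all positive `p, q` with `(1/c)p ≤ q ≤ cp` componentwise, one has
`(1/c)I(p) < I(q) < cI(p)` componentwise. -/
def TwoSidedScalable {n : ℕ} (I : (Fin n → ℝ) → (Fin n → ℝ)) : Prop :=
  ∀ c : ℝ, 1 < c → ∀ p q : Fin n → ℝ, (∀ i, 0 < p i) → (∀ i, 0 < q i) →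
    (∀ i, (1 / c) * p i ≤ q i) → (∀ i, q i ≤ c * p i) →
    ∀ i, (1 / c) * I p i < I q i ∧ I q i < c * I p i

/-- If `I` is two-sided scalable then the log-transformed map
`f(x) = ln I(eˣ)` is a shrinking map in the sup norm:
`‖f x − f y‖_∞ < ‖x − y‖_∞` whenever `x ≠ y`.
(The norm on `Fin n → ℝ` is the sup norm.) -/
theorem twoSidedScalable_log_shrinking {n : ℕ} (I : (Fin n → ℝ) → (Fin n → ℝ))
    (hI : TwoSidedScalable I)
    (f : (Fin n → ℝ) → (Fin n → ℝ))
    (hf : ∀ x i, f x i = Real.log (I (fun j => Real.exp (x j)) i)) :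
    ∀ x y : Fin n → ℝ, x ≠ y → ‖f x - f y‖ < ‖x - y‖ := by
  intro x y hxy
  set r := ‖x - y‖ with hr
  have hr0 : 0 < r := norm_pos_iff.mpr (sub_ne_zero.mpr hxy)
  set c := Real.exp r with hc
  have hc1 : 1 < c := by
    rw [hc, ← Real.exp_zero]
    exact Real.exp_lt_exp.mpr hr0
  have hc0 : 0 < c := lt_trans one_pos hc1
  set p : Fin n → ℝ := fun j => Real.exp (y j) with hp
  set q : Fin n → ℝ := fun j => Real.exp (x j) with hq
  have hpp : ∀ i, 0 < p i := fun i => Real.exp_pos _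
  have hqp : ∀ i, 0 < q i := fun i => Real.exp_pos _
  have hcomp : ∀ i, |x i - y i| ≤ r := by
    intro i
    have := norm_le_pi_norm (x - y) i
    simpa using this
  have hinv : (1 : ℝ) / c = Real.exp (-r) := by
    rw [Real.exp_neg, hc, one_div]
  have hb1 : ∀ i, (1 / c) * p i ≤ q i := by
    intro i
    rw [hinv, hp, hq, ← Real.exp_add]
    apply Real.exp_le_exp.mpr
    have := (abs_le.mp (hcomp i)).1
    linarith
  have hb2 : ∀ i, q i ≤ c * p i := by
    intro i
    rw [hc, hp, hq, ← Real.exp_add]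
    apply Real.exp_le_exp.mpr
    have := (abs_le.mp (hcomp i)).2
    linarith
  -- positivity of I p and I q
  have hself : ∀ z : Fin n → ℝ, (∀ i, 0 < z i) → ∀ i, 0 < I z i := by
    intro z hz i
    have hb : ∀ i, (1 / c) * z i ≤ z i := by
      intro i
      have h1 : (1 : ℝ) / c < 1 := by
        rw [div_lt_one hc0]; exact hc1
      nlinarith [hz i]
    have hb' : ∀ i, z i ≤ c * z i := by
      intro i
      nlinarith [hz i]
    have := (hI c hc1 z z hz hz hb hb' i).1
    have h1 : (1 : ℝ) / c < 1 := by rw [div_lt_one hc0]; exact hc1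
    nlinarith
  have hIp := hself p hpp
  have hIq := hself q hqp
  have key := hI c hc1 p q hpp hqp hb1 hb2
  rw [pi_norm_lt_iff hr0]
  intro i
  have h1 := (key i).1
  have h2 := (key i).2
  have hlog1 : Real.log (I q i) < Real.log c + Real.log (I p i) := by
    rw [← Real.log_mul (ne_of_gt hc0) (ne_of_gt (hIp i))]
    exact Real.log_lt_log (hIq i) h2
  have hlog2 : Real.log (I p i) - Real.log c < Real.log (I q i) := by
    have : Real.log ((1 / c) * I p i) < Real.log (I q i) :=
      Real.log_lt_log (mul_pos (one_div_pos.mpr hc0) (hIp i)) h1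
    rw [Real.log_mul (ne_of_gt (one_div_pos.mpr hc0)) (ne_of_gt (hIp i)),
      Real.log_div one_ne_zero (ne_of_gt hc0), Real.log_one, zero_sub] at this
    linarith
  have hlogc : Real.log c = r := by rw [hc, Real.log_exp]
  have hfx : f x i = Real.log (I q i) := hf x i
  have hfy : f y i = Real.log (I p i) := hf y i
  have : ‖(f x - f y) i‖ = |Real.log (I q i) - Real.log (I p i)| := by
    simp [hfx, hfy]
  rw [this, abs_sub_lt_iff]
  constructor <;> linarith
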